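/- Let q = p^r be a power of an odd prime p, n an odd positive integer, k = 𝔽_{q²} and l = 𝔽_{q^{2n}}, so l/k has degree n. Let α ∈ l^× satisfy l = k(α) and α^{q^n} = α^{-1}, let f ∈ k[x] be the minimal polynomial of α over k, fix a k-basis of l and let M = m_α ∈ M_n(k) be the matrix of multiplication by α (which is invertible since α ≠ 0). Let M̄ denote the matrix obtained from M by applying x ↦ x^q to every entry. Then f(ᵗ(M̄)^{-1}) = 0; that is, the transpose of the entrywise-Frobenius of M, inverted, is also a root of the minimal polynomial of α over k. -/

import Mathlib

/-!
Let `σ` be the `q`-power Frobenius of `k`; it is an involution because `|k| = q²`, and because `n`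
is odd the map `x ↦ x ^ q ^ n` of `l` restricts to `σ` on `k`. Applying that map to `f(α) = 0`
shows that `α⁻¹ = α ^ q ^ n` is a root of `f^σ`, hence so is `m_{α⁻¹} = M⁻¹`. Applying `σ`
entrywise, `f = (f^σ)^σ` vanishes at `σ(M⁻¹) = M̄⁻¹`, and transposition preserves this.
-/

open Matrix Polynomial

theorem Matrix.aeval_transpose {m R S : Type*} [Fintype m] [DecidableEq m] [CommSemiring R]
    [CommSemiring S] [Algebra R S] (A : Matrix m m S) (p : R[X]) :
    aeval Aᵀ p = (aeval A p)ᵀ := by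
  apply MulOpposite.op_injective
  rw [← aeval_op_apply]
  exact aeval_algHom_apply (transposeAlgEquiv m R S).toAlgHom A p

theorem RingHom.mapMatrix_comp_algebraMap {m R S : Type*} [Fintype m] [DecidableEq m]
    [CommSemiring R] [CommSemiring S] (f : R →+* S) :
    (f.mapMatrix : Matrix m m R →+* Matrix m m S).comp (algebraMap R (Matrix m m R)) =
      (algebraMap S (Matrix m m S)).comp f := by
  ext c : 1
  simp [algebraMap_eq_diagonal]

theorem Matrix.map_aeval {m R S : Type*} [Fintype m] [DecidableEq m] [CommSemiring R]
    [CommSemiring S] (f : R →+* S) (A : Matrix m m R) (p : R[X]) :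
    (aeval A p).map f = aeval (A.map f) (p.map f) :=
  map_aeval_eq_aeval_map (f.mapMatrix_comp_algebraMap).symm p A

theorem Matrix.map_inv {m K L : Type*} [Fintype m] [DecidableEq m] [Field K] [Field L]
    (f : K →+* L) (A : Matrix m m K) : (A.map f)⁻¹ = A⁻¹.map f := by
  rw [inv_def, inv_def, Ring.inverse_eq_inv', Ring.inverse_eq_inv',
    Matrix.map_smul' _ _ _ (map_mul f), map_inv₀, f.map_det]
  exact congrArg _ (f.map_adjugate A).symm

theorem Algebra.leftMulMatrix_inv {ι K L : Type*} [Fintype ι] [DecidableEq ι] [Field K] [Field L]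
    [Algebra K L] (b : Module.Basis ι K L) (x : L) :
    leftMulMatrix b x⁻¹ = (leftMulMatrix b x)⁻¹ := by
  rcases eq_or_ne x 0 with rfl | hx
  · simp
  · refine (inv_eq_right_inv ?_).symm
    rw [← map_mul, mul_inv_cancel₀ hx, map_one]

theorem FiniteField.pow_pow_of_odd {K : Type*} [GroupWithZero K] [Fintype K] {q n : ℕ}
    (hK : Fintype.card K = q ^ 2) (hn : Odd n) (c : K) : c ^ q ^ n = c ^ q := by
  obtain ⟨m, rfl⟩ := hn
  rw [pow_succ, pow_mul, pow_mul, ← hK, FiniteField.pow_card_pow]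

theorem aeval_pow_pow_map_iterateFrobenius {k l : Type*} [Field k] [Fintype k] [CommRing l]
    [Algebra k l] {p r n : ℕ} [ExpChar k p] [ExpChar l p] (hk : Fintype.card k = (p ^ r) ^ 2)
    (hn : Odd n) {f : k[X]} {α : l} (hα : aeval α f = 0) :
    aeval (α ^ (p ^ r) ^ n) (f.map (iterateFrobenius k p r)) = 0 := by
  have hcomm : (algebraMap k l).comp (iterateFrobenius k p r) =
      (iterateFrobenius l p (r * n)).comp (algebraMap k l) := by
    ext c
    simp only [RingHom.comp_apply, iterateFrobenius_def, ← map_pow, pow_mul,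
      FiniteField.pow_pow_of_odd hk hn]
  have h := map_aeval_eq_aeval_map hcomm f α
  rwa [hα, map_zero, iterateFrobenius_def, pow_mul, eq_comm] at h

theorem aeval_transpose_map_leftMulMatrix_eq_zero {ι k l : Type*} [Fintype ι] [DecidableEq ι]
    [Field k] [CommRing l] [Algebra k l] (b : Module.Basis ι k l) {σ : k →+* k}
    (hσ : σ.comp σ = RingHom.id k) {f : k[X]} {β : l} (hβ : aeval β (f.map σ) = 0) :
    aeval ((Algebra.leftMulMatrix b β).map σ)ᵀ f = 0 := by
  rw [aeval_transpose, ← map_id (p := f), ← hσ, ← Polynomial.map_map, ← Matrix.map_aeval,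
    aeval_algHom_apply, hβ, map_zero, Matrix.map_zero _ (map_zero σ), transpose_zero]

theorem minpoly_transpose_frobenius_inv_root_general (p r q n : ℕ) (hp : p.Prime)
    (hq : q = p ^ r) (hn : Odd n)
    (k l : Type*) [Field k] [Fintype k] [Field l] [Algebra k l]
    (hcardk : Fintype.card k = q ^ 2)
    (b : Module.Basis (Fin n) k l)
    (α : l)
    (hα : α ^ q ^ n = α⁻¹) :
    Polynomial.aeval
        ((((LinearMap.toMatrix b b (LinearMap.mulLeft k α)).map (fun x => x ^ q))ᵀ)⁻¹)
        (minpoly k α) = 0 := by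
  subst hq
  have : Fact p.Prime := ⟨hp⟩
  have : CharP k p := charP_of_card_eq_prime_pow (hcardk.trans (pow_mul p r 2).symm)
  have : CharP l p := charP_of_injective_algebraMap (algebraMap k l).injective p
  have hσ : (iterateFrobenius k p r).comp (iterateFrobenius k p r) = RingHom.id k := by
    ext c
    simp only [RingHom.comp_apply, iterateFrobenius_def, ← pow_mul, ← sq, ← hcardk,
      FiniteField.pow_card, RingHom.id_apply]
  have hroot := aeval_pow_pow_map_iterateFrobenius hcardk hn (minpoly.aeval k α)
  rw [hα] at hroot
  have hM : (LinearMap.toMatrix b b (LinearMap.mulLeft k α)).map (· ^ p ^ r) =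
      (Algebra.leftMulMatrix b α).map (iterateFrobenius k p r) := rfl
  rw [hM, ← transpose_nonsing_inv, Matrix.map_inv, ← Algebra.leftMulMatrix_inv]
  exact aeval_transpose_map_leftMulMatrix_eq_zero b hσ hroot

/-- With `q = p^r` (`p` odd prime), `n` odd, `k = 𝔽_{q²}`, `l = 𝔽_{q^{2n}}`,
`α ∈ l^×` with `l = k(α)` and `α^{q^n} = α⁻¹`, `f` the minimal polynomial of `α`
over `k`, and `M = m_α` the matrix of multiplication by `α` in a fixed `k`-basis:
the matrix `ᵗ(M̄)⁻¹` (entrywise `q`-power Frobenius, transpose, inverse) is also a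
root of `f`. -/
theorem minpoly_transpose_frobenius_inv_root (p r q n : ℕ) (hp : p.Prime)
    (hodd : Odd p) (hr : 0 < r) (hq : q = p ^ r) (hn : Odd n) (hn0 : 0 < n)
    (k l : Type*) [Field k] [Fintype k] [Field l] [Fintype l] [Algebra k l]
    (hcardk : Fintype.card k = q ^ 2) (hcardl : Fintype.card l = q ^ (2 * n))
    (hdeg : Module.finrank k l = n)
    (b : Module.Basis (Fin n) k l)
    (α : l) (hα0 : α ≠ 0) (hgen : Algebra.adjoin k {α} = ⊤)
    (hα : α ^ q ^ n = α⁻¹) :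
    Polynomial.aeval
        ((((LinearMap.toMatrix b b (LinearMap.mulLeft k α)).map (fun x => x ^ q))ᵀ)⁻¹)
        (minpoly k α) = 0 :=
  minpoly_transpose_frobenius_inv_root_general p r q n hp hq hn k l hcardk b α hα
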